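/- arXiv:2412.05196 — 2 statements merged into one kernel-verified Lean document; each statement's English description precedes it below -/
import Mathlib

section
/- Assume π(n) > 0 for every node n. Then the slenderness cost function Λ is self-counting: for every real θ ≥ 0, the set {n : Λ(n) ≤ θ} is finite and has at most θ elements. -/
/-- A rooted tree: a parent map with a root that every node reaches after finitely
many applications of the parent map. -/
structure ParentTree (N : Type*) where
  root : N
  par : N → N
  par_root : par root = root
  reaches_root : ∀ n : N, ∃ k : ℕ, par^[k] n = root

namespace ParentTree

variable {N : Type*}

/-- `t.anc n m` means `n` is an ancestor of `m` (possibly `n = m`). -/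
def anc (t : ParentTree N) (n m : N) : Prop := ∃ k : ℕ, t.par^[k] m = n

/-- The set of children of a node. -/
def children (t : ParentTree N) (n : N) : Set N := {m | m ≠ t.root ∧ t.par m = n}

/-- The depth of a node: the least `k` with `par^[k] n = root`. -/
noncomputable def depth (t : ParentTree N) (n : N) : ℕ := sInf {k : ℕ | t.par^[k] n = t.root}

end ParentTree

/-- A policy: conditional probabilities `π(m | par m)` on nodes, summing to at most 1
over the children of any node. -/
structure Policy {N : Type*} (t : ParentTree N) where
  cond : N → ℝ
  cond_nonneg : ∀ m : N, 0 ≤ cond m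
  cond_le_one : ∀ m : N, cond m ≤ 1
  sum_le_one : ∀ (n : N) (s : Finset N), ↑s ⊆ t.children n → ∑ m ∈ s, cond m ≤ 1

namespace Policy

variable {N : Type*} {t : ParentTree N}

/-- The path probability `π(n)`: the product of the conditional probabilities along the
path from the root to `n` (so `π(root) = 1` and `π(m) = π(m | par m)·π(par m)`). -/
noncomputable def pathProb (P : Policy t) (n : N) : ℝ :=
  ∏ k ∈ Finset.range (t.depth n), P.cond (t.par^[k] n)

/-- The slenderness cost function `Λ(n) = Σ_{n̄ ⪯ n} 1/π(n̄)`, summing over all ancestors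
of `n` including `n` itself. -/
noncomputable def slend (P : Policy t) (n : N) : ℝ :=
  ∑ k ∈ Finset.range (t.depth n + 1), (P.pathProb (t.par^[k] n))⁻¹

end Policy

/-- A real-valued cost function is self-counting if for every `θ ≥ 0` the set of nodes of
cost at most `θ` is finite and has at most `θ` elements. -/
def SelfCountingR {α : Type*} (c : α → ℝ) : Prop :=
  ∀ θ : ℝ, 0 ≤ θ → {n | c n ≤ θ}.Finite ∧ ({n | c n ≤ θ}.ncard : ℝ) ≤ θ


namespace ParentTree
variable {N : Type*}
variable (t : ParentTree N)

lemma iterate_root (k : ℕ) : t.par^[k] t.root = t.root :=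
  Function.iterate_fixed t.par_root k

lemma depth_spec (n : N) : t.par^[t.depth n] n = t.root :=
  Nat.sInf_mem (t.reaches_root n)

lemma depth_root : t.depth t.root = 0 :=
  Nat.eq_zero_of_le_zero (Nat.sInf_le (t.iterate_root 0))

lemma depth_eq_zero {n : N} (h : t.depth n = 0) : n = t.root := by
  have := t.depth_spec n; rwa [h] at this

lemma depth_succ {n : N} (h : n ≠ t.root) : t.depth n = t.depth (t.par n) + 1 := by
  have h1 : t.par^[t.depth (t.par n) + 1] n = t.root := by
    rw [Function.iterate_succ_apply]; exact t.depth_spec (t.par n)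
  refine le_antisymm (Nat.sInf_le h1) ?_
  by_contra hc
  push_neg at hc
  have hd := t.depth_spec n
  rcases Nat.exists_eq_add_of_lt hc with ⟨j, hj⟩
  -- depth n < depth (par n) + 1, so depth n ≤ depth (par n)
  have hle : t.depth n ≤ t.depth (t.par n) := Nat.lt_succ_iff.mp hc
  have hne : t.depth n ≠ 0 := fun h0 => h (t.depth_eq_zero h0)
  obtain ⟨d, hdn⟩ := Nat.exists_eq_succ_of_ne_zero hne
  have : t.par^[d] (t.par n) = t.root := by
    rw [← Function.iterate_succ_apply, ← hdn]; exact hd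
  have : t.depth (t.par n) ≤ d := Nat.sInf_le this
  omega

lemma depth_iterate {n : N} {k : ℕ} (hk : k ≤ t.depth n) :
    t.depth (t.par^[k] n) + k = t.depth n := by
  induction k with
  | zero => simp
  | succ j ih =>
    have hj : j ≤ t.depth n := Nat.le_of_succ_le hk
    have hne : t.par^[j] n ≠ t.root := by
      intro h
      have : t.depth (t.par^[j] n) = 0 := by rw [h]; exact t.depth_root
      omega
    have := t.depth_succ hne
    rw [Function.iterate_succ_apply']
    have h2 := ih hj
    omega

lemma anc_root (n : N) : t.anc t.root n := t.reaches_root n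

lemma anc_iterate_le {n : N} {k : ℕ} (hk : t.par^[k] n ≠ t.root) : k ≤ t.depth n := by
  by_contra hc
  push_neg at hc
  apply hk
  have := t.depth_spec n
  calc t.par^[k] n = t.par^[k - t.depth n] (t.par^[t.depth n] n) := by
        rw [← Function.iterate_add_apply]; congr 1; omega
    _ = t.root := by rw [this]; exact t.iterate_root _



variable {N : Type*} (t : ParentTree N)

lemma exists_child_anc {r n : N} (h : t.anc r n) (hne : n ≠ r) :
    ∃ c, c ∈ t.children r ∧ t.anc c n := by
  have hne' : {k : ℕ | t.par^[k] n = r}.Nonempty := h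
  set k0 := sInf {k : ℕ | t.par^[k] n = r} with hk0
  have hmem : t.par^[k0] n = r := Nat.sInf_mem hne'
  have hk0ne : k0 ≠ 0 := by
    intro h0; rw [h0] at hmem; exact hne hmem
  obtain ⟨j, hj⟩ := Nat.exists_eq_succ_of_ne_zero hk0ne
  refine ⟨t.par^[j] n, ⟨?_, ?_⟩, ⟨j, rfl⟩⟩
  · intro hc
    have hroot : r = t.root := by
      rw [← hmem, hj, Function.iterate_succ_apply', hc, t.par_root]
    have : j ∈ {k : ℕ | t.par^[k] n = r} := by rw [Set.mem_setOf_eq, hc, hroot]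
    have := Nat.sInf_le this
    omega
  · rw [← hmem, hj, Function.iterate_succ_apply']

lemma child_unique {r c c' n : N} (hc : c ∈ t.children r) (hc' : c' ∈ t.children r)
    (h : t.anc c n) (h' : t.anc c' n) : c = c' := by
  obtain ⟨j, hj⟩ := h
  obtain ⟨j', hj'⟩ := h'
  have hd : t.depth c = t.depth r + 1 := by rw [t.depth_succ hc.1, hc.2]
  have hd' : t.depth c' = t.depth r + 1 := by rw [t.depth_succ hc'.1, hc'.2]
  have hle : j ≤ t.depth n := t.anc_iterate_le (by rw [hj]; exact hc.1)
  have hle' : j' ≤ t.depth n := t.anc_iterate_le (by rw [hj']; exact hc'.1)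
  have e1 := t.depth_iterate hle
  have e2 := t.depth_iterate hle'
  rw [hj] at e1; rw [hj'] at e2
  have : j = j' := by omega
  rw [← hj, ← hj', this]


end ParentTree

namespace Policy
variable {N : Type*} {t : ParentTree N}
variable (P : Policy t)

lemma pathProb_root : P.pathProb t.root = 1 := by
  unfold pathProb; rw [t.depth_root]; simp

lemma pathProb_succ {n : N} (h : n ≠ t.root) :
    P.pathProb n = P.cond n * P.pathProb (t.par n) := by
  unfold pathProb
  rw [t.depth_succ h, Finset.prod_range_succ']
  simp only [Function.iterate_succ_apply, Function.iterate_zero_apply]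
  ring

lemma pathProb_le_one (n : N) : P.pathProb n ≤ 1 := by
  unfold pathProb
  exact Finset.prod_le_one (fun i _ => P.cond_nonneg _) (fun i _ => P.cond_le_one _)

lemma slend_root : P.slend t.root = 1 := by
  unfold slend; rw [t.depth_root]; simp [P.pathProb_root]

lemma slend_succ {n : N} (h : n ≠ t.root) :
    P.slend n = (P.pathProb n)⁻¹ + P.slend (t.par n) := by
  unfold slend
  rw [t.depth_succ h, Finset.sum_range_succ']
  simp only [Function.iterate_succ_apply, Function.iterate_zero_apply]
  ring

lemma slend_par_le (hpos : ∀ n : N, 0 < P.pathProb n) (n : N) :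
    P.slend (t.par n) ≤ P.slend n := by
  by_cases h : n = t.root
  · rw [h, t.par_root]
  · rw [P.slend_succ h]
    have := hpos n
    have : 0 < (P.pathProb n)⁻¹ := by positivity
    linarith

lemma slend_anc_le (hpos : ∀ n : N, 0 < P.pathProb n) {r n : N} (h : t.anc r n) :
    P.slend r ≤ P.slend n := by
  obtain ⟨k, hk⟩ := h
  subst hk
  induction k with
  | zero => simp
  | succ j ih =>
    rw [Function.iterate_succ_apply']
    exact le_trans (P.slend_par_le hpos _) ih



variable {N : Type*} {t : ParentTree N} (P : Policy t)

lemma pathProb_child {r c : N} (hc : c ∈ t.children r) :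
    P.pathProb c = P.cond c * P.pathProb r := by
  rw [P.pathProb_succ hc.1, hc.2]

lemma slend_child {r c : N} (hc : c ∈ t.children r) :
    P.slend c = (P.pathProb c)⁻¹ + P.slend r := by
  rw [P.slend_succ hc.1, hc.2]

lemma cond_pos (hpos : ∀ n : N, 0 < P.pathProb n) {r c : N} (hc : c ∈ t.children r) :
    0 < P.cond c := by
  have h1 := hpos c
  rw [P.pathProb_child hc] at h1
  rcases (P.cond_nonneg c).lt_or_eq with h | h
  · exact h
  · rw [← h] at h1; simp at h1


end Policy

open Classical in
lemma key {N : Type*} (t : ParentTree N) (hfin : ∀ n : N, (t.children n).Finite)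
    (P : Policy t) (hpos : ∀ n : N, 0 < P.pathProb n) :
    ∀ (M : ℕ) (r : N) (θ : ℝ), 0 ≤ θ → θ ≤ M →
      {n | t.anc r n ∧ P.pathProb r * (P.slend n - P.slend r) + 1 ≤ θ}.Finite ∧
      (({n | t.anc r n ∧ P.pathProb r * (P.slend n - P.slend r) + 1 ≤ θ}.ncard : ℝ)) ≤ θ := by
  intro M
  induction M with
  | zero =>
    intro r θ h0 h1
    have hempty : {n | t.anc r n ∧ P.pathProb r * (P.slend n - P.slend r) + 1 ≤ θ} = ∅ := by
      ext n
      simp only [Set.mem_setOf_eq, Set.mem_empty_iff_false, iff_false, not_and]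
      intro hanc
      have h2 := P.slend_anc_le hpos hanc
      have h3 := hpos r
      norm_num at h1
      nlinarith [mul_nonneg h3.le (sub_nonneg.mpr h2)]
    rw [hempty]
    simp
    exact h0
  | succ M ih =>
    intro r θ h0 h1
    by_cases hθ : θ < 1
    · have hempty : {n | t.anc r n ∧ P.pathProb r * (P.slend n - P.slend r) + 1 ≤ θ} = ∅ := by
        ext n
        simp only [Set.mem_setOf_eq, Set.mem_empty_iff_false, iff_false, not_and]
        intro hanc
        have h2 := P.slend_anc_le hpos hanc
        have h3 := hpos r
        nlinarith [mul_nonneg h3.le (sub_nonneg.mpr h2)]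
      rw [hempty]
      simp
      exact h0
    push_neg at hθ
    set S : N → ℝ → Set N :=
      fun r θ => {n | t.anc r n ∧ P.pathProb r * (P.slend n - P.slend r) + 1 ≤ θ} with hS
    have hIH : ∀ c : N, (S c (P.cond c * (θ - 1))).Finite ∧
        ((S c (P.cond c * (θ - 1))).ncard : ℝ) ≤ P.cond c * (θ - 1) := by
      intro c
      refine ih c _ (mul_nonneg (P.cond_nonneg c) (by linarith)) ?_
      have h2 : P.cond c * (θ - 1) ≤ θ - 1 :=
        mul_le_of_le_one_left (by linarith) (P.cond_le_one c)
      push_cast at h1 ⊢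
      linarith
    set F : Finset N := (hfin r).toFinset with hF
    have hsub : S r θ ⊆ insert r (⋃ c ∈ F, S c (P.cond c * (θ - 1))) := by
      intro n hn
      obtain ⟨hanc, hval⟩ := hn
      by_cases hnr : n = r
      · exact Set.mem_insert_iff.mpr (Or.inl hnr)
      · obtain ⟨c, hc, hcanc⟩ := t.exists_child_anc hanc hnr
        refine Set.mem_insert_iff.mpr (Or.inr ?_)
        have hcF : c ∈ F := (hfin r).mem_toFinset.mpr hc
        refine Set.mem_biUnion hcF ?_
        refine ⟨hcanc, ?_⟩
        have e1 : P.pathProb c = P.cond c * P.pathProb r := P.pathProb_child hc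
        have e2 : P.slend c = (P.pathProb c)⁻¹ + P.slend r := P.slend_child hc
        have hπc := hpos c
        have hπr := hpos r
        have hcond := P.cond_pos hpos hc
        have hinv : P.pathProb c * (P.pathProb c)⁻¹ = 1 := mul_inv_cancel₀ (ne_of_gt hπc)
        -- goal : P.pathProb c * (P.slend n - P.slend c) + 1 ≤ P.cond c * (θ - 1)
        have key1 : P.pathProb c * (P.slend n - P.slend c) + 1
            = P.cond c * (P.pathProb r * (P.slend n - P.slend r)) := by
          rw [e2, show P.slend n - ((P.pathProb c)⁻¹ + P.slend r)
              = (P.slend n - P.slend r) - (P.pathProb c)⁻¹ by ring,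
            mul_sub, hinv, e1]
          ring
        rw [key1]
        have h2 : P.pathProb r * (P.slend n - P.slend r) ≤ θ - 1 := by linarith
        nlinarith [P.cond_nonneg c]
    -- Finiteness
    have hUfin : (⋃ c ∈ F, S c (P.cond c * (θ - 1))).Finite :=
      Set.Finite.biUnion F.finite_toSet (fun c _ => (hIH c).1)
    have hfinS : (S r θ).Finite := ((hUfin.insert r).subset hsub)
    refine ⟨hfinS, ?_⟩
    -- Cardinality
    have hcard1 : (S r θ).ncard ≤ (insert r (⋃ c ∈ F, S c (P.cond c * (θ - 1)))).ncard :=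
      Set.ncard_le_ncard hsub (hUfin.insert r)
    have hcard2 : (insert r (⋃ c ∈ F, S c (P.cond c * (θ - 1)))).ncard
        ≤ (⋃ c ∈ F, S c (P.cond c * (θ - 1))).ncard + 1 := Set.ncard_insert_le _ _
    -- bound the union via Finsets
    have hcard3 : ((⋃ c ∈ F, S c (P.cond c * (θ - 1))).ncard : ℝ)
        ≤ ∑ c ∈ F, ((S c (P.cond c * (θ - 1))).ncard : ℝ) := by
      have hcoe : (⋃ c ∈ F, S c (P.cond c * (θ - 1)))
          = ↑(F.biUnion (fun c => (hIH c).1.toFinset)) := by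
        rw [Finset.coe_biUnion]
        simp [Set.Finite.coe_toFinset]
      rw [hcoe, Set.ncard_coe_finset]
      have hb := Finset.card_biUnion_le (s := F) (t := fun c => (hIH c).1.toFinset)
      calc ((F.biUnion (fun c => (hIH c).1.toFinset)).card : ℝ)
          ≤ ((∑ c ∈ F, (hIH c).1.toFinset.card : ℕ) : ℝ) := by exact_mod_cast hb
        _ = ∑ c ∈ F, ((S c (P.cond c * (θ - 1))).ncard : ℝ) := by
            push_cast
            refine Finset.sum_congr rfl (fun c _ => ?_)
            exact_mod_cast congrArg (Nat.cast (R := ℝ))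
              (Set.ncard_eq_toFinset_card _ (hIH c).1).symm
    have hsum : ∑ c ∈ F, ((S c (P.cond c * (θ - 1))).ncard : ℝ) ≤ (θ - 1) := by
      calc ∑ c ∈ F, ((S c (P.cond c * (θ - 1))).ncard : ℝ)
          ≤ ∑ c ∈ F, P.cond c * (θ - 1) := Finset.sum_le_sum (fun c _ => (hIH c).2)
        _ = (∑ c ∈ F, P.cond c) * (θ - 1) := by rw [Finset.sum_mul]
        _ ≤ 1 * (θ - 1) := by
            apply mul_le_mul_of_nonneg_right _ (by linarith)
            exact P.sum_le_one r F (by simp [hF, Set.Finite.coe_toFinset])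
        _ = θ - 1 := one_mul _
    have : ((S r θ).ncard : ℝ) ≤ ((⋃ c ∈ F, S c (P.cond c * (θ - 1))).ncard : ℝ) + 1 := by
      exact_mod_cast le_trans hcard1 hcard2
    linarith

theorem stmt2' {N : Type*} (t : ParentTree N) (hfin : ∀ n : N, (t.children n).Finite)
    (P : Policy t) (hpos : ∀ n : N, 0 < P.pathProb n) :
    ∀ θ : ℝ, 0 ≤ θ → {n | P.slend n ≤ θ}.Finite ∧ ({n | P.slend n ≤ θ}.ncard : ℝ) ≤ θ := by
  intro θ h0
  obtain ⟨M, hM⟩ := exists_nat_ge θ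
  have := key t hfin P hpos M t.root θ h0 hM
  have hset : {n | t.anc t.root n ∧ P.pathProb t.root * (P.slend n - P.slend t.root) + 1 ≤ θ}
      = {n | P.slend n ≤ θ} := by
    ext n
    simp only [Set.mem_setOf_eq, P.pathProb_root, P.slend_root, one_mul]
    constructor
    · rintro ⟨_, h⟩; linarith
    · intro h; exact ⟨t.anc_root n, by linarith⟩
  rwa [hset] at this


/-- if `π(n) > 0` for every node, the slenderness cost function `Λ` is
self-counting. -/
theorem stmt2 {N : Type*} (t : ParentTree N) (hfin : ∀ n : N, (t.children n).Finite)
    (P : Policy t) (hpos : ∀ n : N, 0 < P.pathProb n) :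
    SelfCountingR P.slend := by
  intro θ h0
  exact stmt2' t hfin P hpos θ h0
end

section
/- Let n_a be a node such that π(m | par m) > 0 for every strict descendant m of n_a. Then the cost function c defined by c(n) = Λ(n | n_a) − 1 if n_a ≺ n, and c(n) = ∞ otherwise, is self-counting. -/
open scoped ENNReal NNReal Classical

namespace ParentTree

variable {N : Type*}

/-- `t.sanc n m` means `n` is a strict ancestor of `m`. -/
def sanc (t : ParentTree N) (n m : N) : Prop := t.anc n m ∧ n ≠ m

/-- The distance from an ancestor `n` to `m`: the least `k` with `par^[k] m = n`. -/
noncomputable def dist (t : ParentTree N) (n m : N) : ℕ := sInf {k : ℕ | t.par^[k] m = n}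

end ParentTree

namespace Policy

variable {N : Type*} {t : ParentTree N}

/-- The relative path probability `π(n | na)` as an extended nonnegative real:
the product of the conditional probabilities along the path from `na` (excluded) to `n`. -/
noncomputable def relProbE (P : Policy t) (na n : N) : ℝ≥0∞ :=
  ∏ j ∈ Finset.range (t.dist na n), ENNReal.ofReal (P.cond (t.par^[j] n))

/-- The rooted slenderness cost `Λ(n | na) = Σ_{na ⪯ n̄ ⪯ n} 1/π(n̄ | na)`, set to `∞`
when `na` is not an ancestor of `n`. -/
noncomputable def rootSlend (P : Policy t) (na n : N) : ℝ≥0∞ :=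
  if t.anc na n then
    ∑ k ∈ Finset.range (t.dist na n + 1), (P.relProbE na (t.par^[k] n))⁻¹
  else ⊤

end Policy

/-- A `[0,∞]`-valued cost function is self-counting if for every `θ ≥ 0` the set of nodes
of cost at most `θ` is finite and has at most `θ` elements. -/
def SelfCountingE {α : Type*} (c : α → ℝ≥0∞) : Prop :=
  ∀ θ : ℝ, 0 ≤ θ →
    {n | c n ≤ ENNReal.ofReal θ}.Finite ∧ ({n | c n ≤ ENNReal.ofReal θ}.ncard : ℝ) ≤ θ

/-!
If `c` is the child of `n_a` on the path to `n`, then `Λ(n | n_a) = 1 + Λ(n | c) / π(c | n_a)`.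
Hence a strict descendant of cost at most `θ` lies below a child `c` with `Λ(n | c) ≤ θ π(c | n_a)`;
such a node is either `c` itself or a strict descendant of `c` of cost at most `θ π(c | n_a) - 1`,
and no child with `θ π(c | n_a) < 1` (in particular none with `π(c | n_a) = 0`) contributes since
`Λ ≥ 1`. By induction on `⌊θ⌋` the nodes below `c` number at most `θ π(c | n_a)`, and summing over
the children gives at most `θ`, as `Σ_c π(c | n_a) ≤ 1`.
-/

namespace Set

variable {α ι : Type*}

def HasCardLE (s : Set α) (θ : ℝ) : Prop := s.Finite ∧ (s.ncard : ℝ) ≤ θ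

theorem hasCardLE_empty {θ : ℝ} (hθ : 0 ≤ θ) : HasCardLE (∅ : Set α) θ := by
  simp [HasCardLE, hθ]

theorem HasCardLE.mono {s t : Set α} {θ θ' : ℝ} (h : HasCardLE t θ) (hst : s ⊆ t) (hθ : θ ≤ θ') :
    HasCardLE s θ' :=
  ⟨h.1.subset hst, le_trans (by exact_mod_cast ncard_le_ncard hst h.1) (h.2.trans hθ)⟩

theorem HasCardLE.insert {s : Set α} {θ : ℝ} (h : HasCardLE s θ) (a : α) :
    HasCardLE (insert a s) (θ + 1) :=
  ⟨h.1.insert a, le_trans (b := (s.ncard : ℝ) + 1) (by exact_mod_cast ncard_insert_le a s)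
    (by linarith [h.2])⟩

theorem hasCardLE_biUnion (F : Finset ι) {s : ι → Set α} {g : ι → ℝ}
    (h : ∀ i ∈ F, HasCardLE (s i) (g i)) : HasCardLE (⋃ i ∈ F, s i) (∑ i ∈ F, g i) :=
  ⟨F.finite_toSet.biUnion fun i hi => (h i hi).1,
    le_trans (by exact_mod_cast F.set_ncard_biUnion_le s) (Finset.sum_le_sum fun i hi => (h i hi).2)⟩

end Set

namespace ParentTree

variable {N : Type*} {t : ParentTree N}

theorem iterate_dist {n m : N} (h : t.anc n m) : t.par^[t.dist n m] m = n :=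
  Nat.sInf_mem h

theorem dist_le {n m : N} {k : ℕ} (h : t.par^[k] m = n) : t.dist n m ≤ k :=
  Nat.sInf_le h

theorem dist_self (n : N) : t.dist n n = 0 :=
  Nat.le_zero.mp (dist_le rfl)

theorem eq_root_of_iterate_eq_self {n : N} {k : ℕ} (hk : 0 < k) (h : t.par^[k] n = n) :
    n = t.root := by
  obtain ⟨m, hm⟩ := t.reaches_root n
  have hperiodic : t.par^[k * m] n = n := (Function.IsPeriodicPt.mul_const h m).eq
  rw [← hperiodic, ← Nat.sub_add_cancel (Nat.le_mul_of_pos_left m hk),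
    Function.iterate_add_apply, hm, Function.iterate_fixed t.par_root]

theorem dist_eq_succ_of_mem_children {n c m : N} (hc : c ∈ t.children n) (h : t.anc c m) :
    t.dist n m = t.dist c m + 1 := by
  obtain ⟨hc_root, hc_par⟩ := hc
  have hd : t.par^[t.dist c m] m = c := iterate_dist h
  have hsucc : t.par^[t.dist c m + 1] m = n := by
    rw [Function.iterate_succ_apply', hd, hc_par]
  refine le_antisymm (dist_le hsucc) (Nat.succ_le_of_lt (not_le.mp fun hle => hc_root ?_))
  -- a shorter path to `n` would close a cycle `n → … → c → n`, forcing `n = c = root`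
  set e := t.dist n m
  have hn_c : t.par^[t.dist c m - e] n = c := by
    rw [← iterate_dist (n := n) ⟨_, hsucc⟩, ← Function.iterate_add_apply, Nat.sub_add_cancel hle, hd]
  have hn_root : n = t.root := eq_root_of_iterate_eq_self (Nat.succ_pos _) (by
    rw [Function.iterate_succ_apply', hn_c, hc_par])
  rw [← hn_c, hn_root, Function.iterate_fixed t.par_root]

theorem exists_mem_children_anc_of_sanc {n m : N} (h : t.sanc n m) :
    ∃ c ∈ t.children n, t.anc c m := by
  have hd : t.par^[t.dist n m] m = n := iterate_dist h.1
  have hpos : 0 < t.dist n m := Nat.pos_of_ne_zero fun h0 => h.2 (by rw [← hd, h0]; rfl)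
  have hpar : t.par (t.par^[t.dist n m - 1] m) = n := by
    rw [← Function.iterate_succ_apply' t.par, Nat.succ_eq_add_one, Nat.sub_add_cancel hpos, hd]
  refine ⟨t.par^[t.dist n m - 1] m, ⟨fun hroot => ?_, hpar⟩, _, rfl⟩
  have hn_root : n = t.root := by rw [← hpar, hroot, t.par_root]
  have := dist_le (hroot.trans hn_root.symm)
  omega

end ParentTree

namespace Policy

open ParentTree

variable {N : Type*} {t : ParentTree N} (P : Policy t)

noncomputable def subtreeCost (na n : N) : ℝ≥0∞ :=
  if t.sanc na n then P.rootSlend na n - 1 else ⊤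

theorem relProbE_self (n : N) : P.relProbE n n = 1 := by
  simp [relProbE, ParentTree.dist_self]

theorem relProbE_le_one (n m : N) : P.relProbE n m ≤ 1 :=
  Finset.prod_le_one' fun _ _ => ENNReal.ofReal_le_one.mpr (P.cond_le_one _)

theorem relProbE_of_mem_children {n c m : N} (hc : c ∈ t.children n) (h : t.anc c m) :
    P.relProbE n m = ENNReal.ofReal (P.cond c) * P.relProbE c m := by
  rw [relProbE, relProbE, dist_eq_succ_of_mem_children hc h, Finset.prod_range_succ,
    iterate_dist h, mul_comm]

theorem anc_of_rootSlend_ne_top {n m : N} (h : P.rootSlend n m ≠ ⊤) : t.anc n m := by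
  by_contra hanc
  exact h (if_neg hanc)

theorem one_le_rootSlend {n m : N} (h : t.anc n m) : 1 ≤ P.rootSlend n m := by
  rw [rootSlend, if_pos h]
  calc (1 : ℝ≥0∞) = (P.relProbE n (t.par^[t.dist n m] m))⁻¹ := by
        rw [iterate_dist h, relProbE_self, inv_one]
    _ ≤ _ := Finset.single_le_sum (f := fun k => (P.relProbE n (t.par^[k] m))⁻¹)
        (fun _ _ => bot_le) (Finset.self_mem_range_succ _)

theorem rootSlend_of_mem_children {n c m : N} (hc : c ∈ t.children n) (h : t.anc c m) :
    P.rootSlend n m = P.rootSlend c m / ENNReal.ofReal (P.cond c) + 1 := by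
  have hsucc : t.par^[t.dist c m + 1] m = n := by
    rw [Function.iterate_succ_apply', iterate_dist h, hc.2]
  rw [rootSlend, rootSlend, if_pos ⟨_, hsucc⟩, if_pos h, dist_eq_succ_of_mem_children hc h,
    Finset.sum_range_succ, hsucc, relProbE_self, inv_one, div_eq_mul_inv, Finset.sum_mul]
  congr 1
  refine Finset.sum_congr rfl fun k hk => ?_
  have hanc_k : t.anc c (t.par^[k] m) := ⟨t.dist c m - k, by
    rw [← Function.iterate_add_apply, Nat.sub_add_cancel (Finset.mem_range_succ_iff.mp hk),
      iterate_dist h]⟩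
  rw [P.relProbE_of_mem_children hc hanc_k, mul_comm,
    ENNReal.mul_inv (Or.inr ENNReal.ofReal_ne_top)
      (Or.inl (ne_top_of_le_ne_top ENNReal.one_ne_top (P.relProbE_le_one _ _)))]

theorem subtreeCost_le_iff {na n : N} {θ : ℝ} :
    P.subtreeCost na n ≤ ENNReal.ofReal θ ↔
      t.sanc na n ∧ P.rootSlend na n ≤ ENNReal.ofReal θ + 1 := by
  by_cases h : t.sanc na n <;> simp [subtreeCost, h, tsub_le_iff_right]

theorem setOf_subtreeCost_le_subset (na : N) (θ : ℝ) :
    {n | P.subtreeCost na n ≤ ENNReal.ofReal θ} ⊆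
      ⋃ c ∈ t.children na, {n | P.rootSlend c n ≤ ENNReal.ofReal (θ * P.cond c)} := by
  intro n hn
  obtain ⟨hsanc, hle⟩ := (P.subtreeCost_le_iff).mp hn
  obtain ⟨c, hc, hanc⟩ := exists_mem_children_anc_of_sanc hsanc
  refine Set.mem_biUnion hc ?_
  rw [P.rootSlend_of_mem_children hc hanc, ENNReal.add_le_add_iff_right ENNReal.one_ne_top,
    ENNReal.div_le_iff_le_mul (Or.inr ENNReal.ofReal_ne_top) (Or.inl ENNReal.ofReal_ne_top)] at hle
  rwa [Set.mem_ofPred_eq, ENNReal.ofReal_mul' (P.cond_nonneg c)]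

theorem setOf_rootSlend_le_subset (c : N) (θ : ℝ) :
    {n | P.rootSlend c n ≤ ENNReal.ofReal θ} ⊆
      insert c {n | P.subtreeCost c n ≤ ENNReal.ofReal (θ - 1)} := by
  intro n hn
  rcases eq_or_ne n c with rfl | hne
  · exact Set.mem_insert n _
  refine Set.mem_insert_of_mem c ((P.subtreeCost_le_iff).mpr
    ⟨⟨P.anc_of_rootSlend_ne_top (ne_top_of_le_ne_top ENNReal.ofReal_ne_top hn), hne.symm⟩, ?_⟩)
  calc P.rootSlend c n ≤ ENNReal.ofReal (θ - 1 + 1) := by rwa [sub_add_cancel]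
    _ ≤ ENNReal.ofReal (θ - 1) + 1 := by
        simpa using ENNReal.ofReal_add_le (p := θ - 1) (q := 1)

theorem setOf_rootSlend_le_eq_empty (c : N) {θ : ℝ} (hθ : θ < 1) :
    {n | P.rootSlend c n ≤ ENNReal.ofReal θ} = ∅ := by
  refine Set.eq_empty_of_forall_notMem fun n hn => hθ.not_ge ?_
  have hanc := P.anc_of_rootSlend_ne_top (ne_top_of_le_ne_top ENNReal.ofReal_ne_top hn)
  exact ENNReal.one_le_ofReal.mp ((P.one_le_rootSlend hanc).trans hn)

theorem hasCardLE_setOf_rootSlend_le (c : N) {θ : ℝ} (hθ : 0 ≤ θ)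
    (h : 1 ≤ θ → {n | P.subtreeCost c n ≤ ENNReal.ofReal (θ - 1)}.HasCardLE (θ - 1)) :
    {n | P.rootSlend c n ≤ ENNReal.ofReal θ}.HasCardLE θ := by
  rcases lt_or_ge θ 1 with h1 | h1
  · rw [P.setOf_rootSlend_le_eq_empty c h1]
    exact Set.hasCardLE_empty hθ
  · exact ((h h1).insert c).mono (P.setOf_rootSlend_le_subset c θ) (sub_add_cancel θ 1).le

theorem hasCardLE_setOf_subtreeCost_le (hfin : ∀ n : N, (t.children n).Finite) (na : N)
    {θ : ℝ} (hθ : 0 ≤ θ)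
    (h : ∀ c ∈ t.children na,
      {n | P.rootSlend c n ≤ ENNReal.ofReal (θ * P.cond c)}.HasCardLE (θ * P.cond c)) :
    {n | P.subtreeCost na n ≤ ENNReal.ofReal θ}.HasCardLE θ := by
  set F := (hfin na).toFinset
  have hsum : ∑ c ∈ F, θ * P.cond c ≤ θ := by
    rw [← Finset.mul_sum]
    exact mul_le_of_le_one_right hθ (P.sum_le_one na F (by simp [F]))
  refine (Set.hasCardLE_biUnion F fun c hc => h c ((hfin na).mem_toFinset.mp hc)).mono ?_ hsum
  simpa [F] using P.setOf_subtreeCost_le_subset na θ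

theorem selfCountingE_subtreeCost (hfin : ∀ n : N, (t.children n).Finite) (na : N) :
    SelfCountingE (P.subtreeCost na) := by
  suffices key : ∀ (k : ℕ) (na : N) (θ : ℝ), 0 ≤ θ → θ < k →
      {n | P.subtreeCost na n ≤ ENNReal.ofReal θ}.HasCardLE θ from
    fun θ hθ => key (⌊θ⌋₊ + 1) na θ hθ (by exact_mod_cast Nat.lt_floor_add_one θ)
  intro k
  induction k with
  | zero => exact fun _ θ hθ hk => absurd hk (by simpa using hθ)
  | succ k ih =>
    intro na θ hθ hk
    refine P.hasCardLE_setOf_subtreeCost_le hfin na hθ fun c _ =>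
      P.hasCardLE_setOf_rootSlend_le c (mul_nonneg hθ (P.cond_nonneg c)) fun h1 =>
        ih c _ (by linarith) ?_
    have : θ * P.cond c ≤ θ := mul_le_of_le_one_right hθ (P.cond_le_one c)
    push_cast at hk
    linarith

end Policy

theorem stmt13_general {N : Type*} (t : ParentTree N) (hfin : ∀ n : N, (t.children n).Finite)
    (P : Policy t) (na : N) :
    SelfCountingE (fun n => if t.sanc na n then P.rootSlend na n - 1 else ⊤) :=
  P.selfCountingE_subtreeCost hfin na

/-- if `π(m | par m) > 0` for every strict descendant `m` of `n_a`, then the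
cost function `c(n) = Λ(n | n_a) − 1` for `n_a ≺ n` and `c(n) = ∞` otherwise is
self-counting. -/
theorem stmt13 {N : Type*} (t : ParentTree N) (hfin : ∀ n : N, (t.children n).Finite)
    (P : Policy t) (na : N)
    (hpos : ∀ m : N, t.sanc na m → 0 < P.cond m) :
    SelfCountingE (fun n => if t.sanc na n then P.rootSlend na n - 1 else ⊤) :=
  stmt13_general t hfin P na
end
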